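/- Let m be a positive integer and F a finite set of faces (unordered triples of distinct indices in Fin m) such that every edge index lies in at least one face and the graph on faces with adjacency given by sharing an edge is connected. Let u, ũ : Fin m → ℝ be admissible metrics (positive, and for each face the square roots satisfy the strict triangle inequalities). Then the cotangent edge weights agree, w_e(u) = w_e(ũ) for all e ∈ Fin m, if and only if there exists c > 0 with ũ_e = c · u_e for all e. -/

import Mathlib

/-!
With `u_e = d_e² / 2`, the quadratic form `Q(x) = (x₁ + x₂ + x₃)² - 2 (x₁² + x₂² + x₃²)` equals
`4 · area²` on a face and is Lorentzian, and an admissible metric is a future timelike vector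
for it. The cotangents of a face form the gradient of `√Q`, which is concave on the future cone
by the reverse Cauchy–Schwarz inequality; hence `∑_e (cot θ_e(u) - cot θ_e(ũ)) (u_e - ũ_e) ≤ 0`
on every face, with equality only if `ũ` is a multiple of `u` on that face. Summed over all faces
this is `2 ∑_e (w_e(u) - w_e(ũ)) (u_e - ũ_e)`, which vanishes when the weights agree. So each face
is scaled by a constant, and neighbouring faces share an edge, hence the constant.
-/

/-- `u` is an admissible metric: `u_e > 0` for every edge, and on each face the
lengths `d_e = √(2 u_e)` satisfy the strict triangle inequalities. -/
def AdmissibleMetric (m : ℕ) (F : Finset (Finset (Fin m))) (u : Fin m → ℝ) : Prop :=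
  (∀ e, 0 < u e) ∧
  ∀ f ∈ F, ∀ i ∈ f, ∀ j ∈ f, ∀ k ∈ f, i ≠ j → i ≠ k → j ≠ k →
    Real.sqrt (2 * u i) < Real.sqrt (2 * u j) + Real.sqrt (2 * u k)

/-- The angle opposite edge `e` in face `f`, determined by the law of cosines:
`cos θ_i = (d_j² + d_k² − d_i²)/(2 d_j d_k)` where `{j,k} = f \ {e}` and
`d_a = √(2 u_a)` (so `d_a² = 2 u_a`). -/
noncomputable def faceAngle (m : ℕ) (u : Fin m → ℝ) (f : Finset (Fin m)) (e : Fin m) : ℝ :=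
  Real.arccos ((∑ a ∈ f.erase e, 2 * u a - 2 * u e) /
    (2 * ∏ a ∈ f.erase e, Real.sqrt (2 * u a)))

/-- The cotangent edge weight `w_e(u) = (1/2) Σ_{f ∈ F, e ∈ f} cot θ_e^f`. -/
noncomputable def cotWeight (m : ℕ) (F : Finset (Finset (Fin m)))
    (u : Fin m → ℝ) (e : Fin m) : ℝ :=
  (1 / 2) * ∑ f ∈ F.filter (fun f => e ∈ f), Real.cot (faceAngle m u f e)

/-- The adjacency graph on the faces: two faces are adjacent when they are
distinct and share an edge index. -/
def faceGraph (m : ℕ) (F : Finset (Finset (Fin m))) :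
    SimpleGraph {f : Finset (Fin m) // f ∈ F} where
  Adj a b := a ≠ b ∧ ((a : Finset (Fin m)) ∩ (b : Finset (Fin m))).Nonempty
  symm := by
    constructor
    rintro a b ⟨hab, hint⟩
    exact ⟨hab.symm, by rwa [Finset.inter_comm]⟩
  loopless := by
    constructor
    rintro a ⟨hne, -⟩
    exact hne rfl

open Finset Real

namespace Lorentz

variable {ι : Type*} {s : Finset ι}

/-- For `#s ≥ 3` this form has signature `(1, #s - 1)`. -/
def form (s : Finset ι) (x y : ι → ℝ) : ℝ :=
  (∑ i ∈ s, x i) * (∑ i ∈ s, y i) - 2 * ∑ i ∈ s, x i * y i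

theorem form_comm (x y : ι → ℝ) : form s x y = form s y x := by
  simp only [form, mul_comm]

-- Cauchy–Schwarz, rewritten for `form`-orthogonal vectors.
theorem form_orthogonal_bound {x z : ι → ℝ} (h : form s x z = 0) :
    form s x x * form s z z +
      2 * (form s x x * ∑ i ∈ s, z i ^ 2 + form s z z * ∑ i ∈ s, x i ^ 2) ≤ 0 := by
  have hcs := sum_mul_sq_le_sq_mul_sq s x z
  simp only [form, ← sq] at h ⊢
  linear_combination 4 * hcs +
    ((∑ i ∈ s, x i) * (∑ i ∈ s, z i) + 2 * ∑ i ∈ s, x i * z i) * h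

theorem form_mul_sub_mul (x y w : ι → ℝ) (a b : ℝ) :
    form s x (fun i => a * y i - b * w i) = a * form s x y - b * form s x w := by
  simp only [form, sum_sub_distrib, mul_sub, ← mul_sum, mul_left_comm (x _)]
  ring

def residual (s : Finset ι) (x y : ι → ℝ) (i : ι) : ℝ :=
  form s x x * y i - form s x y * x i

theorem form_residual_right (x y : ι → ℝ) : form s x (residual s x y) = 0 := by
  unfold residual
  rw [form_mul_sub_mul]
  ring

theorem form_residual_self (x y : ι → ℝ) :
    form s (residual s x y) (residual s x y) =
      form s x x * (form s x x * form s y y - form s x y ^ 2) := by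
  conv_lhs => arg 3; unfold residual
  rw [form_mul_sub_mul, form_comm (residual s x y) x, form_residual_right, form_comm _ y]
  unfold residual
  rw [form_mul_sub_mul, form_comm y x]
  ring

/-- Reverse Cauchy–Schwarz inequality for a timelike vector `x`. -/
theorem mul_le_sq_form {x : ι → ℝ} (hx : 0 < form s x x) (y : ι → ℝ) :
    form s x x * form s y y ≤ form s x y ^ 2 := by
  have hb := form_orthogonal_bound (form_residual_right (s := s) x y)
  have hz : form s (residual s x y) (residual s x y) ≤ 0 := by
    by_contra! hz
    have : 0 ≤ ∑ i ∈ s, residual s x y i ^ 2 := sum_nonneg fun i _ => sq_nonneg _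
    have : 0 ≤ ∑ i ∈ s, x i ^ 2 := sum_nonneg fun i _ => sq_nonneg _
    nlinarith
  rw [form_residual_self] at hz
  nlinarith

theorem eq_mul_of_sq_form_eq {x y : ι → ℝ} (hx : 0 < form s x x)
    (h : form s x x * form s y y = form s x y ^ 2) :
    ∀ i ∈ s, y i = form s x y / form s x x * x i := by
  have hb := form_orthogonal_bound (form_residual_right (s := s) x y)
  rw [form_residual_self, h, sub_self, mul_zero] at hb
  have hsum : ∑ i ∈ s, residual s x y i ^ 2 = 0 :=
    le_antisymm (by nlinarith) (sum_nonneg fun i _ => sq_nonneg _)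
  intro i hi
  have hi0 := (sum_eq_zero_iff_of_nonneg fun i _ => sq_nonneg (residual s x y i)).1 hsum i hi
  rw [residual, sq_eq_zero_iff, sub_eq_zero] at hi0
  field_simp
  linarith

def IsFutureTimelike (s : Finset ι) (x : ι → ℝ) : Prop :=
  0 < form s x x ∧ 0 < ∑ i ∈ s, x i

theorem IsFutureTimelike.form_pos {x y : ι → ℝ} (hx : IsFutureTimelike s x)
    (hy : IsFutureTimelike s y) : 0 < form s x y := by
  obtain ⟨hx, hsx⟩ := hx
  obtain ⟨hy, hsy⟩ := hy
  have hcs := sum_mul_sq_le_sq_mul_sq s x y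
  have hx2 : 0 ≤ ∑ i ∈ s, x i ^ 2 := sum_nonneg fun i _ => sq_nonneg _
  have hy2 : 0 ≤ ∑ i ∈ s, y i ^ 2 := sum_nonneg fun i _ => sq_nonneg _
  simp only [form, ← sq] at hx hy ⊢
  have hlt : (2 * ∑ i ∈ s, x i * y i) ^ 2 < ((∑ i ∈ s, x i) * ∑ i ∈ s, y i) ^ 2 := by
    nlinarith [mul_lt_mul'' hx hy (by linarith) (by linarith)]
  linarith [le_abs_self (2 * ∑ i ∈ s, x i * y i), abs_lt_of_sq_lt_sq hlt (by positivity)]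

theorem IsFutureTimelike.sqrt_mul_sqrt_le_form {x y : ι → ℝ} (hx : IsFutureTimelike s x)
    (hy : IsFutureTimelike s y) : √(form s x x) * √(form s y y) ≤ form s x y := by
  rw [← sqrt_mul hx.1.le, ← sqrt_sq (hx.form_pos hy).le]
  exact sqrt_le_sqrt (mul_le_sq_form hx.1 y)

/-- On a triangle with `x_e = d_e² / 2` one has `form s x x = 4 · area²`, and `cotVector s x e`
is the cotangent of the angle opposite `e`; it is the gradient of `√(form s x x)`. -/
noncomputable def cotVector (s : Finset ι) (x : ι → ℝ) (i : ι) : ℝ :=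
  (∑ j ∈ s, x j - 2 * x i) / √(form s x x)

theorem cotVector_const_mul {c : ℝ} (hc : 0 < c) (x : ι → ℝ) (i : ι) :
    cotVector s (fun j => c * x j) i = cotVector s x i := by
  have hform : form s (fun j => c * x j) (fun j => c * x j) = c ^ 2 * form s x x := by
    simp only [form, ← mul_sum, mul_mul_mul_comm c]
    ring
  rw [cotVector, cotVector, hform, sqrt_mul (sq_nonneg c), sqrt_sq hc.le, ← mul_sum,
    mul_left_comm 2 c, ← mul_sub, mul_div_mul_left _ _ hc.ne']

theorem sum_cotVector_mul (x y : ι → ℝ) :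
    ∑ i ∈ s, cotVector s x i * y i = form s x y / √(form s x x) := by
  simp only [cotVector, div_mul_eq_mul_div, ← sum_div, sub_mul, sum_sub_distrib,
    mul_assoc, ← mul_sum, form]

theorem sum_cotVector_sub_mul_sub {x y : ι → ℝ} (hx : 0 < form s x x) (hy : 0 < form s y y) :
    ∑ i ∈ s, (cotVector s x i - cotVector s y i) * (x i - y i) =
      (√(form s x x) * √(form s y y) - form s x y) *
        ((√(form s x x))⁻¹ + (√(form s y y))⁻¹) := by
  simp only [sub_mul, mul_sub, sum_sub_distrib, sum_cotVector_mul, form_comm y x]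
  have hnx := (sqrt_pos.2 hx).ne'
  have hny := (sqrt_pos.2 hy).ne'
  rw [div_sqrt, div_sqrt]
  field_simp
  ring

theorem IsFutureTimelike.sum_cotVector_sub_mul_sub_nonpos {x y : ι → ℝ}
    (hx : IsFutureTimelike s x) (hy : IsFutureTimelike s y) :
    ∑ i ∈ s, (cotVector s x i - cotVector s y i) * (x i - y i) ≤ 0 := by
  have hx₀ := hx.1
  have hy₀ := hy.1
  rw [sum_cotVector_sub_mul_sub hx₀ hy₀]
  exact mul_nonpos_of_nonpos_of_nonneg (sub_nonpos.2 (hx.sqrt_mul_sqrt_le_form hy))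
    (by positivity)

theorem IsFutureTimelike.exists_pos_eq_mul_of_sum_cotVector_sub_mul_sub_eq_zero
    {x y : ι → ℝ} (hx : IsFutureTimelike s x) (hy : IsFutureTimelike s y)
    (h : ∑ i ∈ s, (cotVector s x i - cotVector s y i) * (x i - y i) = 0) :
    ∃ c, 0 < c ∧ ∀ i ∈ s, y i = c * x i := by
  have hx₀ := hx.1
  have hy₀ := hy.1
  rw [sum_cotVector_sub_mul_sub hx₀ hy₀, mul_eq_zero, sub_eq_zero] at h
  have heq : √(form s x x) * √(form s y y) = form s x y :=
    h.resolve_right (by positivity)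
  refine ⟨form s x y / form s x x, div_pos (hx.form_pos hy) hx₀,
    eq_mul_of_sq_form_eq hx₀ ?_⟩
  rw [← heq, mul_pow, sq_sqrt hx₀.le, sq_sqrt hy₀.le]

end Lorentz

theorem triangle_heron_pos {a b c : ℝ} (ha : a < b + c) (hb : b < a + c) (hc : c < a + b) :
    0 < (a ^ 2 + b ^ 2 + c ^ 2) ^ 2 - 2 * ((a ^ 2) ^ 2 + (b ^ 2) ^ 2 + (c ^ 2) ^ 2) := by
  have heron : (a ^ 2 + b ^ 2 + c ^ 2) ^ 2 - 2 * ((a ^ 2) ^ 2 + (b ^ 2) ^ 2 + (c ^ 2) ^ 2) =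
      (a + b + c) * (b + c - a) * (a + c - b) * (a + b - c) := by ring
  rw [heron]
  have : 0 < a + b + c := by linarith
  have : 0 < b + c - a := by linarith
  have : 0 < a + c - b := by linarith
  have : 0 < a + b - c := by linarith
  positivity

theorem Real.cot_arccos (t : ℝ) : cot (arccos t) = t / √(1 - t ^ 2) := by
  rw [cot_eq_cos_div_sin, sin_arccos]
  by_cases ht : t ^ 2 ≤ 1
  · rw [cos_arccos (neg_le_of_abs_le (sq_le_one_iff_abs_le_one t |>.1 ht))
      (le_of_abs_le (sq_le_one_iff_abs_le_one t |>.1 ht))]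
  · rw [sqrt_eq_zero_of_nonpos (by linarith), div_zero, div_zero]

theorem cot_arccos_lawOfCosines (a b c : ℝ) (hb : 0 < b) (hc : 0 < c) :
    cot (arccos ((2 * b + 2 * c - 2 * a) / (2 * (√(2 * b) * √(2 * c))))) =
      (b + c - a) / √((a + b + c) ^ 2 - 2 * (a ^ 2 + b ^ 2 + c ^ 2)) := by
  set r := √(2 * b) * √(2 * c)
  have hr : 0 < r := by positivity
  have hr2 : r ^ 2 = 4 * b * c := by
    rw [mul_pow, sq_sqrt (by positivity), sq_sqrt (by positivity)]
    ring
  have hcos : (2 * b + 2 * c - 2 * a) / (2 * r) = (b + c - a) / r := by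
    rw [← mul_div_mul_left (b + c - a) r two_ne_zero]
    ring_nf
  have hsin :
      1 - ((b + c - a) / r) ^ 2 = ((a + b + c) ^ 2 - 2 * (a ^ 2 + b ^ 2 + c ^ 2)) / r ^ 2 := by
    field_simp
    rw [hr2]
    ring
  rw [hcos, cot_arccos, hsin, sqrt_div' _ (sq_nonneg r), sqrt_sq hr.le,
    div_div_div_cancel_right₀ hr.ne']

theorem cot_faceAngle {m : ℕ} {u : Fin m → ℝ} (hu : ∀ i, 0 < u i) {f : Finset (Fin m)}
    (hf : f.card = 3) {e : Fin m} (he : e ∈ f) :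
    cot (faceAngle m u f e) = Lorentz.cotVector f u e := by
  obtain ⟨j, k, hjk, hpair⟩ := card_eq_two.1 (by rw [card_erase_of_mem he, hf])
  have hinsert : f = insert e {j, k} := by rw [← hpair, insert_erase he]
  have hej : e ∉ ({j, k} : Finset (Fin m)) := hpair ▸ notMem_erase e f
  rw [faceAngle, hpair, sum_pair hjk, prod_pair hjk,
    cot_arccos_lawOfCosines _ _ _ (hu j) (hu k), Lorentz.cotVector, Lorentz.form, hinsert]
  simp only [sum_insert hej, sum_pair hjk]
  congr 1
  · ring
  · congr 1
    ring

theorem AdmissibleMetric.isFutureTimelike {m : ℕ} {F : Finset (Finset (Fin m))}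
    {u : Fin m → ℝ} (hu : AdmissibleMetric m F u) {f : Finset (Fin m)} (hfF : f ∈ F)
    (hf : f.card = 3) : Lorentz.IsFutureTimelike f u := by
  refine ⟨?_, sum_pos (fun i _ => hu.1 i) (card_pos.1 (by rw [hf]; norm_num))⟩
  obtain ⟨i, j, k, hij, hik, hjk, rfl⟩ := card_eq_three.1 hf
  have hi : i ∉ ({j, k} : Finset (Fin m)) := by simp [hij, hik]
  have hheron := triangle_heron_pos
    (hu.2 _ hfF i (by simp) j (by simp) k (by simp) hij hik hjk)
    (hu.2 _ hfF j (by simp) i (by simp) k (by simp) hij.symm hjk hik)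
    (hu.2 _ hfF k (by simp) i (by simp) j (by simp) hik.symm hjk.symm hij)
  simp only [sq_sqrt (mul_pos two_pos (hu.1 _)).le] at hheron
  simp only [Lorentz.form, sum_insert hi, sum_pair hjk]
  linear_combination hheron / 4

theorem cotWeight_eq_sum_cotVector {m : ℕ} {F : Finset (Finset (Fin m))}
    (hF : ∀ f ∈ F, f.card = 3) {u : Fin m → ℝ} (hu : ∀ i, 0 < u i) (e : Fin m) :
    cotWeight m F u e = 1 / 2 * ∑ f ∈ F.filter (fun f => e ∈ f), Lorentz.cotVector f u e := by
  rw [cotWeight]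
  congr 1
  refine sum_congr rfl fun f hf => ?_
  rw [mem_filter] at hf
  exact cot_faceAngle hu (hF f hf.1) hf.2

theorem sum_faces_sum_cotVector_sub_mul_sub {m : ℕ} {F : Finset (Finset (Fin m))}
    (hF : ∀ f ∈ F, f.card = 3) {u v : Fin m → ℝ} (hu : ∀ i, 0 < u i) (hv : ∀ i, 0 < v i) :
    ∑ f ∈ F, ∑ e ∈ f, (Lorentz.cotVector f u e - Lorentz.cotVector f v e) * (u e - v e) =
      2 * ∑ e, (cotWeight m F u e - cotWeight m F v e) * (u e - v e) := by
  rw [sum_comm' (t' := univ) (s' := fun e => F.filter (fun f => e ∈ f)) (by simp), mul_sum]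
  refine sum_congr rfl fun e _ => ?_
  rw [← sum_mul, sum_sub_distrib, cotWeight_eq_sum_cotVector hF hu,
    cotWeight_eq_sum_cotVector hF hv]
  ring

theorem SimpleGraph.Reachable.apply_eq_of_adj {V β : Type*} {G : SimpleGraph V} {g : V → β}
    (hg : ∀ a b, G.Adj a b → g a = g b) {a b : V} (h : G.Reachable a b) : g a = g b := by
  rw [SimpleGraph.reachable_iff_reflTransGen] at h
  induction h with
  | refl => rfl
  | tail _ hbc ih => exact ih.trans (hg _ _ hbc)

theorem exists_pos_forall_eq_mul_of_connected {m : ℕ} {F : Finset (Finset (Fin m))}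
    {u v : Fin m → ℝ} (hu : ∀ e, u e ≠ 0) (hcover : ∀ e : Fin m, ∃ f ∈ F, e ∈ f)
    (hconn : (faceGraph m F).Connected)
    (hface : ∀ f ∈ F, ∃ c : ℝ, 0 < c ∧ ∀ e ∈ f, v e = c * u e) :
    ∃ c : ℝ, 0 < c ∧ ∀ e, v e = c * u e := by
  choose c hc hcu using fun f : {f // f ∈ F} => hface f f.2
  have hadj : ∀ a b, (faceGraph m F).Adj a b → c a = c b := by
    rintro a b ⟨-, e, he⟩
    rw [mem_inter] at he
    exact mul_right_cancel₀ (hu e) ((hcu a e he.1).symm.trans (hcu b e he.2))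
  obtain ⟨f₀⟩ := hconn.nonempty
  refine ⟨c f₀, hc f₀, fun e => ?_⟩
  obtain ⟨f, hf, he⟩ := hcover e
  rw [hcu ⟨f, hf⟩ e he, (hconn.preconnected f₀ ⟨f, hf⟩).apply_eq_of_adj hadj]

theorem global_rigidity_general (m : ℕ)
    (F : Finset (Finset (Fin m))) (hF : ∀ f ∈ F, f.card = 3)
    (hcover : ∀ e : Fin m, ∃ f ∈ F, e ∈ f)
    (hconn : (faceGraph m F).Connected)
    (u v : Fin m → ℝ)
    (hu : AdmissibleMetric m F u) (hv : AdmissibleMetric m F v) :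
    (∀ e : Fin m, cotWeight m F u e = cotWeight m F v e) ↔
      ∃ c : ℝ, 0 < c ∧ ∀ e, v e = c * u e := by
  constructor
  · intro hw
    have htimelike : ∀ f ∈ F, Lorentz.IsFutureTimelike f u ∧ Lorentz.IsFutureTimelike f v :=
      fun f hf => ⟨hu.isFutureTimelike hf (hF f hf), hv.isFutureTimelike hf (hF f hf)⟩
    have htotal := sum_faces_sum_cotVector_sub_mul_sub hF hu.1 hv.1
    simp only [hw, sub_self, zero_mul, sum_const_zero, mul_zero] at htotal
    have hzero := (sum_eq_zero_iff_of_nonpos fun f hf =>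
      (htimelike f hf).1.sum_cotVector_sub_mul_sub_nonpos (htimelike f hf).2).1 htotal
    exact exists_pos_forall_eq_mul_of_connected (fun e => (hu.1 e).ne') hcover hconn
      fun f hf => (htimelike f hf).1.exists_pos_eq_mul_of_sum_cotVector_sub_mul_sub_eq_zero
        (htimelike f hf).2 (hzero f hf)
  · rintro ⟨c, hc, hvc⟩ e
    obtain rfl : v = fun e => c * u e := funext hvc
    simp only [cotWeight_eq_sum_cotVector hF hu.1, cotWeight_eq_sum_cotVector hF hv.1,
      Lorentz.cotVector_const_mul hc]

/-- Global Rigidity Theorem. On a connected triangulated surface,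
two admissible metrics have the same cotangent edge weights if and only if they
differ by a positive scaling. -/
theorem global_rigidity (m : ℕ) (hm : 0 < m)
    (F : Finset (Finset (Fin m))) (hF : ∀ f ∈ F, f.card = 3)
    (hcover : ∀ e : Fin m, ∃ f ∈ F, e ∈ f)
    (hconn : (faceGraph m F).Connected)
    (u v : Fin m → ℝ)
    (hu : AdmissibleMetric m F u) (hv : AdmissibleMetric m F v) :
    (∀ e : Fin m, cotWeight m F u e = cotWeight m F v e) ↔
      ∃ c : ℝ, 0 < c ∧ ∀ e, v e = c * u e :=
  global_rigidity_general m F hF hcover hconn u v hu hv
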